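/- arXiv:math/9712272 — 3 statements merged into one kernel-verified Lean document; each statement's English description precedes it below -/
import Mathlib

section
/- Let (C_β) be a global square sequence with associated function n. Let k ≤ m be natural numbers, let α be an uncountable regular cardinal, and let C be a closed set of ordinals, each greater than α^{+m}, of order type α^{+m}+1. Then C ∩ {β : β is a singular limit ordinal and n(β) ≥ k} contains a closed subset of order type α^{+(m−k)}+1. -/
open Set

/-- The order type of a set of ordinals: the unique ordinal `o` such that
`Set.Iio o` is order-isomorphic to `X` (or `0` if no such ordinal exists,
which can only happen for proper-class-sized `X`). -/
noncomputable def otype.{u} (X : Set Ordinal.{u}) : Ordinal.{u} :=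
  sInf {o : Ordinal.{u} | Nonempty (Set.Iio o ≃o X)}

/-- A set (or class) of ordinals is closed if it contains the supremum of every
nonempty bounded-above subset of itself. -/
def IsClosedSet (C : Set Ordinal) : Prop :=
  ∀ s : Set Ordinal, s ⊆ C → s.Nonempty → BddAbove s → sSup s ∈ C

/-- `limPts X` is the class of limit ordinals `γ` with `sup (X ∩ γ) = γ`. -/
def limPts (X : Set Ordinal) : Set Ordinal :=
  {γ | Order.IsSuccLimit γ ∧ sSup (X ∩ Set.Iio γ) = γ}

/-- An ordinal is singular if it is a limit ordinal whose cofinality is smaller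
than itself. -/
def IsSing (β : Ordinal) : Prop := Order.IsSuccLimit β ∧ β.cof.ord < β

/-- `X` is a closed unbounded subset of the ordinal `β`. -/
def IsClubIn (X : Set Ordinal) (β : Ordinal) : Prop :=
  X ⊆ Set.Iio β ∧
    (∀ s : Set Ordinal, s ⊆ X → s.Nonempty → sSup s < β → sSup s ∈ X) ∧
    ∀ η < β, ∃ x ∈ X, η < x

/-- A global square sequence. -/
structure GlobalSquare where
  C : Ordinal → Set Ordinal
  club : ∀ β, IsSing β → IsClubIn (C β) β
  ot_lt : ∀ β, IsSing β → otype (C β) < β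
  coh : ∀ β, IsSing β → ∀ γ ∈ limPts (C β), γ < β →
    IsSing γ ∧ C γ = C β ∩ Set.Iio γ

/-- `ν` is the function `n` associated to the global square sequence `S`. -/
def IsAssocFn (S : GlobalSquare) (ν : Ordinal → ℕ) : Prop :=
  open scoped Classical in
  ∀ β, IsSing β →
    ν β = if IsSing (otype (S.C β)) then ν (otype (S.C β)) + 1 else 0

/-- Iterated cardinal successor: `succIt α k = α⁺...⁺` (`k` times). -/
noncomputable def succIt (α : Cardinal) : ℕ → Cardinal
  | 0 => α
  | k + 1 => Order.succ (succIt α k)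

/-- An ordinal which is (the ordinal of) a regular cardinal. -/
def IsRegOrd (α : Ordinal) : Prop := ∃ κ : Cardinal, κ.IsRegular ∧ α = κ.ord

/-- End-extension ordering: `EndExt p q` means `p ≤ q`, i.e. `p` end-extends `q`. -/
def EndExt (p q : Set Ordinal) : Prop :=
  q ⊆ p ∧ ∀ x ∈ p \ q, ∀ y ∈ q, y < x

/-- The class forcing associated to a square sequence with associated function `ν`
and `k ∈ ℕ`: nonempty closed bounded sets of ordinals all of whose elements are
regular cardinals or singular of `ν`-value at least `k+1`. -/
def Pforcing (ν : Ordinal → ℕ) (k : ℕ) : Set (Set Ordinal) :=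
  {p | p.Nonempty ∧ IsClosedSet p ∧ BddAbove p ∧
    ∀ α ∈ p, IsRegOrd α ∨ (IsSing α ∧ k + 1 ≤ ν α)}

/-!
Induction on `k`. For `k = 0`, the points of `C` of limit index (at most `α^{+m}`) are singular,
as the cofinality of such a point is at most its index. For the inductive step let `β = max C`:
it is singular of cofinality `κ = α^{+m}`, so `C_β` and `C ∩ β`, being clubs in `β`, meet in a
club. Enumerate `C_β` by a normal function `f`; the limit indices `a` with `f a ∈ C` then contain
a closed set `T` of order type `α^{+(m-1)} + 1` above `α^{+(m-1)}`, since `ot(C_β)` has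
cofinality `κ`. Coherence gives `C_{f a} = f[a]`, so `n(f a) = n(a) + 1` for singular `a`; apply
the induction hypothesis to `T` and map the result by `f`.
-/

open Order Ordinal

universe u

theorem otype_congr {X Y : Set Ordinal.{u}} (e : X ≃o Y) : otype X = otype Y := by
  unfold otype
  congr 1
  ext o
  exact ⟨fun ⟨g⟩ => ⟨g.trans e⟩, fun ⟨g⟩ => ⟨g.trans e.symm⟩⟩

theorem otype_Iio (o : Ordinal) : otype (Iio o) = o := by
  have h : {o' | Nonempty (Iio o' ≃o Iio o)} = {o} := by
    ext o'
    refine ⟨fun ⟨g⟩ => ?_, fun h => h ▸ ⟨OrderIso.refl _⟩⟩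
    have := g.toRelIsoLT.ordinalType_congr
    rwa [type_lt_Iio, type_lt_Iio, lift_inj] at this
  rw [otype, h, csInf_singleton]

theorem otype_Iic (o : Ordinal) : otype (Iic o) = o + 1 := by
  rw [← Iio_succ, otype_Iio, succ_eq_add_one]

theorem otype_image_of_strictMonoOn {f : Ordinal.{u} → Ordinal.{u}} {V : Set Ordinal}
    (hf : StrictMonoOn f V) : otype (f '' V) = otype V :=
  (otype_congr (hf.orderIso f V)).symm

theorem bddAbove_of_otype_ne_zero {X : Set Ordinal.{u}} (h : otype X ≠ 0) : BddAbove X := by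
  obtain ⟨o, ⟨g⟩⟩ : ∃ o : Ordinal.{u}, Nonempty (Iio o ≃o X) := by
    by_contra! hX
    refine h ?_
    have : {o : Ordinal.{u} | Nonempty (Iio o ≃o X)} = ∅ :=
      eq_empty_of_forall_notMem fun o hg => (hX o).false hg.some
    rw [otype, this, Ordinal.sInf_empty]
  have : Small X := small_map g.symm.toEquiv
  exact bddAbove_of_small

theorem StrictMono.image_Iio_inter_Iio {f : Ordinal.{u} → Ordinal.{u}} (hf : StrictMono f)
    {a ρ : Ordinal} (haρ : a ≤ ρ) : f '' Iio ρ ∩ Iio (f a) = f '' Iio a := by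
  ext x
  constructor
  · rintro ⟨⟨b, -, rfl⟩, hb⟩
    exact ⟨b, hf.lt_iff_lt.1 hb, rfl⟩
  · rintro ⟨b, hb, rfl⟩
    exact ⟨⟨b, hb.trans_le haρ, rfl⟩, hf hb⟩

theorem isClosedSet_Iic (a : Ordinal) : IsClosedSet (Iic a) :=
  fun _ ht hne _ => csSup_le hne ht

theorem Order.IsNormal.isClosedSet_image {f : Ordinal.{u} → Ordinal.{u}} (hf : IsNormal f)
    {V : Set Ordinal} (hV : IsClosedSet V) : IsClosedSet (f '' V) := by
  intro t ht hne ⟨b, hb⟩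
  set s := V ∩ f ⁻¹' t
  have hst : f '' s = t := by rw [image_inter_preimage, inter_eq_right.2 ht]
  have hsne : s.Nonempty := by
    obtain ⟨x, hx⟩ := hne
    obtain ⟨a, haV, rfl⟩ := ht hx
    exact ⟨a, haV, hx⟩
  have hsbdd : BddAbove s := ⟨b, fun a ha => hf.strictMono.le_apply.trans (hb ha.2)⟩
  rw [← hst, ← hf.map_sSup hsne hsbdd]
  exact mem_image_of_mem f (hV s inter_subset_left hsne hsbdd)

theorem Order.IsNormal.isSing_apply {f : Ordinal.{u} → Ordinal.{u}} (hf : IsNormal f) {l : Ordinal}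
    (hl : IsSuccLimit l) (hlt : l < f l) : IsSing (f l) :=
  ⟨hf.map_isSuccLimit hl, by rw [cof_map_of_isNormal hf hl]; exact (ord_cof_le l).trans_lt hlt⟩

theorem Order.IsNormal.mem_limPts_image_Iio {f : Ordinal.{u} → Ordinal.{u}} (hf : IsNormal f)
    {a ρ : Ordinal} (ha : IsSuccLimit a) (haρ : a ≤ ρ) : f a ∈ limPts (f '' Iio ρ) := by
  refine ⟨hf.map_isSuccLimit ha, ?_⟩
  rw [hf.strictMono.image_Iio_inter_Iio haρ]
  exact (hf.isLUB_image_Iio_of_isSuccLimit ha).csSup_eq ⟨f 0, 0, ha.bot_lt, rfl⟩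

theorem exists_isNormal_image_Iio_otype {X : Set Ordinal.{u}} {b : Ordinal.{u}}
    (hXb : X ⊆ Iio b) (hX : ∀ t ⊆ X, t.Nonempty → sSup t < b → sSup t ∈ X) :
    ∃ e, IsNormal e ∧ e '' Iio (otype X) = X ∧ e (otype X) = b := by
  -- padding `X` with `Ici b` makes it closed and unbounded, so it has a normal enumeration
  set s := X ∪ Ici b
  have hs : ¬ BddAbove s := fun h => not_bddAbove_Ici b (h.mono subset_union_right)
  have hs_closed : ∀ t ⊆ s, t.Nonempty → BddAbove t → sSup t ∈ s := by
    intro t ht hne hbdd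
    by_cases hlt : sSup t < b
    · refine Or.inl (hX t (fun x hx => ?_) hne hlt)
      exact (ht hx).resolve_right (not_le.2 ((le_csSup hbdd hx).trans_lt hlt))
    · exact Or.inr (not_lt.1 hlt)
  have he := isNormal_enumOrd hs_closed hs
  obtain ⟨o, ho⟩ := enumOrd_surjective hs (Or.inr self_mem_Ici : b ∈ s)
  have himage : enumOrd s '' Iio o = X := by
    ext x
    constructor
    · rintro ⟨a, ha, rfl⟩
      exact (enumOrd_mem hs a).resolve_right (not_le.2 (ho ▸ he.strictMono ha))
    · intro hx
      obtain ⟨a, rfl⟩ := enumOrd_surjective hs (Or.inl hx)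
      exact ⟨a, he.strictMono.lt_iff_lt.1 (ho ▸ hXb hx), rfl⟩
  have hot : otype X = o := by
    rw [← himage, otype_image_of_strictMonoOn (he.strictMono.strictMonoOn _), otype_Iio]
  exact ⟨enumOrd s, he, hot ▸ himage, hot ▸ ho⟩

theorem IsClosedSet.exists_isNormal_image_Iio_otype {C : Set Ordinal.{u}} (hC : IsClosedSet C)
    (hbdd : BddAbove C) : ∃ e, IsNormal e ∧ e '' Iio (otype C) = C := by
  obtain ⟨b, hb⟩ := hbdd
  obtain ⟨e, he, heC, -⟩ := _root_.exists_isNormal_image_Iio_otype (b := succ b)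
    (fun x hx => lt_succ_of_le (hb hx)) (fun t ht hne _ => hC t ht hne ⟨b, fun x hx => hb (ht hx)⟩)
  exact ⟨e, he, heC⟩

theorem isSuccLimit_of_forall_lt_exists_lt {e : Ordinal.{u} → Ordinal.{u}} (he : StrictMono e)
    {τ : Ordinal.{u}} (hpos : 0 < e τ) (hub : ∀ η < e τ, ∃ a < τ, η < e a) : IsSuccLimit τ := by
  refine isSuccLimit_iff.2 ⟨?_, isSuccPrelimit_of_succ_lt fun a ha => ?_⟩
  · obtain ⟨a, ha, -⟩ := hub 0 hpos
    exact (pos_of_gt ha).ne'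
  · obtain ⟨a', ha', hlt⟩ := hub (e a) (he ha)
    exact (succ_le_of_lt (he.lt_iff_lt.1 hlt)).trans_lt ha'

theorem IsClubIn.exists_isNormal {X : Set Ordinal.{u}} {b : Ordinal.{u}} (hX : IsClubIn X b)
    (hb : 0 < b) : ∃ e, IsNormal e ∧ e '' Iio (otype X) = X ∧ e (otype X) = b ∧
      IsSuccLimit (otype X) ∧ (otype X).cof = b.cof := by
  obtain ⟨e, he, heX, heb⟩ := exists_isNormal_image_Iio_otype hX.1 hX.2.1
  have hlim : IsSuccLimit (otype X) := by
    refine isSuccLimit_of_forall_lt_exists_lt he.strictMono (heb ▸ hb) fun η hη => ?_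
    obtain ⟨_, hx, hηx⟩ := hX.2.2 η (heb ▸ hη)
    obtain ⟨a, ha, rfl⟩ := heX ▸ hx
    exact ⟨a, ha, hηx⟩
  exact ⟨e, he, heX, heb, hlim, heb ▸ (cof_map_of_isNormal he hlim).symm⟩

theorem isClubIn_Ioo {a b : Ordinal.{u}} (hb : IsSuccLimit b) (hab : a < b) :
    IsClubIn (Ioo a b) b := by
  refine ⟨Ioo_subset_Iio_self, fun t ht ⟨x, hx⟩ hlt => ⟨?_, hlt⟩, fun η hη => ?_⟩
  · exact (ht hx).1.trans_le (le_csSup ⟨b, fun y hy => (ht hy).2.le⟩ hx)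
  · refine ⟨succ (max η a), ⟨?_, hb.succ_lt (max_lt hη hab)⟩, ?_⟩
    · exact (le_max_right η a).trans_lt (lt_succ _)
    · exact (le_max_left η a).trans_lt (lt_succ _)

theorem IsClubIn.preimage_of_isNormal {f : Ordinal.{u} → Ordinal.{u}} (hf : IsNormal f)
    {Z : Set Ordinal.{u}} {ρ : Ordinal.{u}} (hZ : IsClubIn Z (f ρ)) (hZf : Z ⊆ f '' Iio ρ) :
    IsClubIn (Iio ρ ∩ f ⁻¹' Z) ρ := by
  refine ⟨inter_subset_left, fun t ht hne hlt => ⟨hlt, ?_⟩, fun η hη => ?_⟩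
  · have hbdd : BddAbove t := ⟨ρ, fun x hx => (ht hx).1.le⟩
    rw [mem_preimage, hf.map_sSup hne hbdd]
    refine hZ.2.1 _ (image_subset_iff.2 fun x hx => (ht hx).2) (hne.image f) ?_
    rw [← hf.map_sSup hne hbdd]
    exact hf.strictMono hlt
  · obtain ⟨z, hz, hηz⟩ := hZ.2.2 (f η) (hf.strictMono hη)
    obtain ⟨a, ha, rfl⟩ := hZf hz
    exact ⟨a, ⟨ha, hz⟩, hf.strictMono.lt_iff_lt.1 hηz⟩

theorem IsClubIn.inter {X Y : Set Ordinal.{u}} {β : Ordinal.{u}} (hX : IsClubIn X β)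
    (hY : IsClubIn Y β) (hβ : Cardinal.aleph0 < β.cof) : IsClubIn (X ∩ Y) β := by
  refine ⟨inter_subset_left.trans hX.1,
    fun t ht hne hlt => ⟨hX.2.1 t (ht.trans inter_subset_left) hne hlt,
      hY.2.1 t (ht.trans inter_subset_right) hne hlt⟩, fun η hη => ?_⟩
  choose! x hxX hx using hX.2.2
  choose! y hyY hy using hY.2.2
  -- alternate between `X` and `Y` along an `ω`-sequence; its limit lies in both
  let s : ℕ → Ordinal.{u} := fun n => (y ∘ x)^[n] η
  have hs_succ (n : ℕ) : s (n + 1) = y (x (s n)) := Function.iterate_succ_apply' _ n η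
  have hsβ (n : ℕ) : s n < β := by
    induction n with
    | zero => exact hη
    | succ n ih => rw [hs_succ]; exact hY.1 (hyY _ (hX.1 (hxX _ ih)))
  have hxs (n : ℕ) : s n < x (s n) ∧ x (s n) < s (n + 1) :=
    ⟨hx _ (hsβ n), hs_succ n ▸ hy _ (hX.1 (hxX _ (hsβ n)))⟩
  have hbdd : BddAbove (range s) := ⟨β, forall_mem_range.2 fun n => (hsβ n).le⟩
  have hz : ⨆ n, s n < β := by
    refine lift_iSup_lt_of_lt_cof ?_ hsβ
    simpa using hβ
  have hzx : ⨆ n, x (s n) = ⨆ n, s n := le_antisymm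
    (ciSup_le fun n => (hxs n).2.le.trans (le_ciSup hbdd (n + 1)))
    (ciSup_mono ⟨β, forall_mem_range.2 fun n => (hX.1 (hxX _ (hsβ n))).le⟩ fun n => (hxs n).1.le)
  have hzy : ⨆ n, s (n + 1) = ⨆ n, s n := le_antisymm
    (ciSup_le fun n => le_ciSup hbdd (n + 1))
    (ciSup_mono ⟨β, forall_mem_range.2 fun n => (hsβ _).le⟩ fun n => ((hxs n).1.trans (hxs n).2).le)
  refine ⟨⨆ n, s n, ⟨?_, ?_⟩, ((hxs 0).1.trans (hxs 0).2).trans_le (le_ciSup hbdd 1)⟩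
  · rw [← hzx]
    exact hX.2.1 _ (range_subset_iff.2 fun n => hxX _ (hsβ n)) (range_nonempty _) (hzx.trans_lt hz)
  · rw [← hzy]
    refine hY.2.1 _ (range_subset_iff.2 fun n => ?_) (range_nonempty _) (hzy.trans_lt hz)
    rw [hs_succ]
    exact hyY _ (hX.1 (hxX _ (hsβ n)))

theorem isNormal_omega0_mul_one_add : IsNormal fun ξ : Ordinal.{u} => ω * (1 + ξ) :=
  (isNormal_mul_right omega0_pos).comp (isNormal_add_right 1)

theorem isSuccLimit_omega0_mul_one_add (ξ : Ordinal.{u}) : IsSuccLimit (ω * (1 + ξ)) :=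
  isSuccLimit_mul_left isSuccLimit_omega0 (zero_lt_one.trans_le le_self_add)

theorem omega0_mul_one_add_ord {c : Cardinal.{u}} (hc : Cardinal.aleph0 < c) :
    ω * (1 + c.ord) = c.ord := by
  rw [one_add_of_omega0_le (Cardinal.omega0_lt_ord.2 hc).le]
  exact op_eq_self_of_isPrincipal (Cardinal.omega0_lt_ord.2 hc) (isNormal_mul_right omega0_pos)
    (isPrincipal_mul_ord hc.le) (Cardinal.isSuccLimit_ord hc.le)

theorem Order.IsNormal.exists_closed_subset_image_limits {g : Ordinal.{u} → Ordinal.{u}}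
    (hg : IsNormal g) {c : Cardinal.{u}} (hc : Cardinal.aleph0 < c) :
    ∃ T ⊆ g '' {l | l ≤ c.ord ∧ IsSuccLimit l}, IsClosedSet T ∧ otype T = c.ord + 1 := by
  have hgL := hg.comp isNormal_omega0_mul_one_add
  refine ⟨(g ∘ fun ξ => ω * (1 + ξ)) '' Iic c.ord, ?_, hgL.isClosedSet_image (isClosedSet_Iic _),
    by rw [otype_image_of_strictMonoOn (hgL.strictMono.strictMonoOn _), otype_Iic]⟩
  rintro _ ⟨ξ, hξ, rfl⟩
  refine ⟨_, ⟨?_, isSuccLimit_omega0_mul_one_add ξ⟩, rfl⟩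
  rw [← omega0_mul_one_add_ord hc]
  exact isNormal_omega0_mul_one_add.monotone hξ

theorem GlobalSquare.isSing_apply_and_otype_C_apply (S : GlobalSquare) {β : Ordinal} (hβ : IsSing β)
    {f : Ordinal → Ordinal} (hf : IsNormal f) {ρ : Ordinal} (hCβ : f '' Iio ρ = S.C β)
    {a : Ordinal} (ha : IsSuccLimit a) (haρ : a < ρ) :
    IsSing (f a) ∧ otype (S.C (f a)) = a := by
  have hlim : f a ∈ limPts (S.C β) := hCβ ▸ hf.mem_limPts_image_Iio ha haρ.le
  have hlt : f a < β := (S.club β hβ).1 (hCβ ▸ mem_image_of_mem f haρ)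
  obtain ⟨hsing, hCfa⟩ := S.coh β hβ (f a) hlim hlt
  refine ⟨hsing, ?_⟩
  rw [hCfa, ← hCβ, hf.strictMono.image_Iio_inter_Iio haρ.le,
    otype_image_of_strictMonoOn (hf.strictMono.strictMonoOn _), otype_Iio]

theorem exists_closed_singular_subset {κ : Cardinal} (hκ : Cardinal.aleph0 < κ)
    {C : Set Ordinal} (hC : IsClosedSet C) (hgt : ∀ x ∈ C, κ.ord < x)
    (hot : otype C = κ.ord + 1) :
    ∃ D ⊆ C ∩ {β | IsSing β}, IsClosedSet D ∧ otype D = κ.ord + 1 := by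
  obtain ⟨e, he, heC⟩ := hC.exists_isNormal_image_Iio_otype
    (bddAbove_of_otype_ne_zero (hot ▸ (add_pos_of_right zero_lt_one _).ne'))
  rw [hot] at heC
  obtain ⟨D, hDsub, hDcl, hDot⟩ := he.exists_closed_subset_image_limits hκ
  refine ⟨D, fun x hx => ?_, hDcl, hDot⟩
  obtain ⟨l, ⟨hlκ, hllim⟩, rfl⟩ := hDsub hx
  have hlC : e l ∈ C := heC ▸ mem_image_of_mem e (lt_add_one_iff.2 hlκ)
  exact ⟨hlC, he.isSing_apply hllim (hlκ.trans_lt (hgt _ hlC))⟩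

theorem exists_isSing_isClubIn_inter_Iio {κ : Cardinal} (hκ : κ.IsRegular)
    (hκ0 : Cardinal.aleph0 < κ) {C : Set Ordinal} (hC : IsClosedSet C)
    (hgt : ∀ x ∈ C, κ.ord < x) (hot : otype C = κ.ord + 1) :
    ∃ β, IsSing β ∧ β.cof = κ ∧ IsClubIn (C ∩ Iio β) β := by
  have hκlim := Cardinal.isSuccLimit_ord hκ0.le
  obtain ⟨e, he, heC⟩ := hC.exists_isNormal_image_Iio_otype
    (bddAbove_of_otype_ne_zero (hot ▸ (add_pos_of_right zero_lt_one _).ne'))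
  rw [hot] at heC
  have hβC : e κ.ord ∈ C := heC ▸ mem_image_of_mem e (lt_add_one κ.ord)
  refine ⟨e κ.ord, he.isSing_apply hκlim (hgt _ hβC),
    by rw [cof_map_of_isNormal he hκlim, hκ.cof_ord],
    inter_subset_right, fun t ht hne hlt => ⟨?_, hlt⟩, fun η hη => ?_⟩
  · exact hC t (ht.trans inter_subset_left) hne ⟨e κ.ord, fun x hx => (ht hx).2.le⟩
  · obtain ⟨a, ha, hηa⟩ := (he.lt_iff_exists_lt hκlim).1 hη
    exact ⟨e a, ⟨heC ▸ mem_image_of_mem e (ha.trans (lt_add_one _)), he.strictMono ha⟩, hηa⟩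

theorem GlobalSquare.exists_closed_otype_C_apply_eq (S : GlobalSquare) {κ c : Cardinal}
    (hκ : κ.IsRegular) (hc : Cardinal.aleph0 < c) (hcκ : c < κ) {C : Set Ordinal}
    (hC : IsClosedSet C) (hgt : ∀ x ∈ C, κ.ord < x) (hot : otype C = κ.ord + 1) :
    ∃ f, IsNormal f ∧ ∃ T, IsClosedSet T ∧ otype T = c.ord + 1 ∧
      ∀ a ∈ T, c.ord < a ∧ f a ∈ C ∧ IsSing (f a) ∧ otype (S.C (f a)) = a := by
  have hκ0 : Cardinal.aleph0 < κ := hc.trans hcκ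
  obtain ⟨β, hβ, hβcof, hCβ⟩ := exists_isSing_isClubIn_inter_Iio hκ hκ0 hC hgt hot
  obtain ⟨f, hf, hfC, hfρ, hρlim, hρcof⟩ := (S.club β hβ).exists_isNormal hβ.1.bot_lt
  set ρ := otype (S.C β)
  rw [hβcof] at hρcof
  have hcρ : c.ord < ρ := (Cardinal.ord_lt_ord.2 hcκ).trans_le (hρcof ▸ ord_cof_le ρ)
  -- the indices `a ∈ (c, ρ)` with `f a ∈ C` form a club in `ρ`
  set W := (Iio ρ ∩ f ⁻¹' (S.C β ∩ (C ∩ Iio β))) ∩ Ioo c.ord ρ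
  have hW : IsClubIn W ρ := by
    refine IsClubIn.inter ?_ (isClubIn_Ioo hρlim hcρ) (hρcof ▸ hκ0)
    refine IsClubIn.preimage_of_isNormal hf (hfρ ▸ (S.club β hβ).inter hCβ (hβcof ▸ hκ0)) ?_
    exact hfC ▸ inter_subset_left
  obtain ⟨g, hg, hgW, -, -, hτcof⟩ := hW.exists_isNormal hρlim.bot_lt
  rw [hρcof] at hτcof
  obtain ⟨T, hTsub, hTcl, hTot⟩ := hg.exists_closed_subset_image_limits hc
  refine ⟨f, hf, T, hTcl, hTot, ?_⟩
  rintro _ hT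
  obtain ⟨l, ⟨hlc, hllim⟩, rfl⟩ := hTsub hT
  have hlτ : l < otype W :=
    hlc.trans_lt ((Cardinal.ord_lt_ord.2 hcκ).trans_le (hτcof ▸ ord_cof_le _))
  obtain ⟨⟨hgρ, -, hgC, -⟩, hcg, -⟩ := hgW ▸ mem_image_of_mem g hlτ
  exact ⟨hcg, hgC, S.isSing_apply_and_otype_C_apply hβ hf hfC (hg.map_isSuccLimit hllim) hgρ⟩

theorem aleph0_lt_succIt {α : Cardinal} (hα : Cardinal.aleph0 < α) (n : ℕ) :
    Cardinal.aleph0 < succIt α n := by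
  induction n with
  | zero => exact hα
  | succ n ih => exact ih.trans_le (le_succ _)

theorem square_lemma_closed_subset_general (S : GlobalSquare) (ν : Ordinal → ℕ)
    (hν : IsAssocFn S ν) (k m : ℕ) (hkm : k ≤ m)
    (α : Cardinal) (hunc : Cardinal.aleph0 < α)
    (C : Set Ordinal) (hclosed : IsClosedSet C)
    (hgt : ∀ x ∈ C, (succIt α m).ord < x)
    (hot : otype C = (succIt α m).ord + 1) :
    ∃ D : Set Ordinal, D ⊆ C ∩ {β | IsSing β ∧ k ≤ ν β} ∧
      IsClosedSet D ∧ otype D = (succIt α (m - k)).ord + 1 := by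
  induction k generalizing m C with
  | zero =>
    obtain ⟨D, hDC, hDcl, hDot⟩ :=
      exists_closed_singular_subset (aleph0_lt_succIt hunc m) hclosed hgt hot
    exact ⟨D, fun x hx => ⟨(hDC hx).1, (hDC hx).2, Nat.zero_le _⟩, hDcl, hDot⟩
  | succ k ih =>
    obtain ⟨m, rfl⟩ : ∃ m', m = m' + 1 := ⟨m - 1, by omega⟩
    have hc := aleph0_lt_succIt hunc m
    obtain ⟨f, hf, T, hTcl, hTot, hT⟩ := S.exists_closed_otype_C_apply_eq
      (Cardinal.isRegular_succ hc.le) hc (lt_succ _) hclosed hgt hot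
    obtain ⟨V, hVT, hVcl, hVot⟩ := ih m (by omega) T hTcl (fun a ha => (hT a ha).1) hTot
    refine ⟨f '' V, ?_, hf.isClosedSet_image hVcl, ?_⟩
    · rintro _ ⟨a, haV, rfl⟩
      obtain ⟨-, hfaC, hfa, hotfa⟩ := hT a (hVT haV).1
      obtain ⟨ha, hka⟩ := (hVT haV).2
      refine ⟨hfaC, hfa, ?_⟩
      rw [hν _ hfa, hotfa, if_pos ha]
      omega
    · rw [otype_image_of_strictMonoOn (hf.strictMono.strictMonoOn _), hVot,
        Nat.add_sub_add_right]

/-- Lemma 3 of Friedman, "New Sigma^1_3 Facts". -/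
theorem square_lemma_closed_subset (S : GlobalSquare) (ν : Ordinal → ℕ)
    (hν : IsAssocFn S ν) (k m : ℕ) (hkm : k ≤ m)
    (α : Cardinal) (hreg : α.IsRegular) (hunc : Cardinal.aleph0 < α)
    (C : Set Ordinal) (hclosed : IsClosedSet C)
    (hgt : ∀ x ∈ C, (succIt α m).ord < x)
    (hot : otype C = (succIt α m).ord + 1) :
    ∃ D : Set Ordinal, D ⊆ C ∩ {β | IsSing β ∧ k ≤ ν β} ∧
      IsClosedSet D ∧ otype D = (succIt α (m - k)).ord + 1 :=
  square_lemma_closed_subset_general S ν hν k m hkm α hunc C hclosed hgt hot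
end

section
/- Let (C_β) be a global square sequence with associated function n, fix k ∈ ℕ, and let P be the associated class forcing ordered by end-extension. Suppose p ∈ P, D is a dense open subclass of P, and β is an ordinal with β > sup p such that β is a regular cardinal or n(β) ≥ k+1, and such that for every r ∈ P with sup r < β there exists s ∈ D with s ≤ r and sup s < β. Then there exists q ∈ P with q ≤ p, q ∈ D, and max q = β. -/
open Set

/-! Catch `p` below `β` by some `s ∈ D` with `sup s < β`, then put `β` on top: `s ∪ {β}` is
still a condition because `β` itself is admissible, and it lies in `D` because `D` is open. -/

theorem EndExt.trans {r q p : Set Ordinal} (hrq : EndExt r q) (hqp : EndExt q p) : EndExt r p := by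
  refine ⟨hqp.1.trans hrq.1, fun x hx y hy => ?_⟩
  by_cases hxq : x ∈ q
  · exact hqp.2 x ⟨hxq, hx.2⟩ y hy
  · exact hrq.2 x ⟨hx.1, hxq⟩ y (hqp.1 hy)

theorem endExt_insert_of_forall_lt {q : Set Ordinal} {β : Ordinal} (hq : ∀ y ∈ q, y < β) :
    EndExt (insert β q) q := by
  refine ⟨subset_insert β q, fun x hx y hy => ?_⟩
  obtain rfl : x = β := (mem_insert_iff.mp hx.1).resolve_right hx.2
  exact hq y hy

theorem IsClosedSet.insert_of_forall_le {s : Set Ordinal} {β : Ordinal} (hs : IsClosedSet s)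
    (hsβ : ∀ x ∈ s, x ≤ β) : IsClosedSet (insert β s) := by
  intro t hts htne htbdd
  by_cases hβt : β ∈ t
  · have hle : ∀ x ∈ t, x ≤ β := fun x hx => forall_insert_of_forall hsβ le_rfl x (hts hx)
    rw [le_antisymm (csSup_le htne hle) (le_csSup htbdd hβt)]
    exact mem_insert β s
  · have hts' : t ⊆ s := fun x hx =>
      (mem_insert_iff.mp (hts hx)).resolve_left (by rintro rfl; exact hβt hx)
    exact mem_insert_of_mem β (hs t hts' htne htbdd)

theorem insert_mem_pforcing {ν : Ordinal → ℕ} {k : ℕ} {s : Set Ordinal} {β : Ordinal}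
    (hs : s ∈ Pforcing ν k) (hsβ : ∀ x ∈ s, x ≤ β)
    (hβ : IsRegOrd β ∨ (IsSing β ∧ k + 1 ≤ ν β)) : insert β s ∈ Pforcing ν k := by
  obtain ⟨-, hscl, -, hsmem⟩ := hs
  exact ⟨insert_nonempty β s, hscl.insert_of_forall_le hsβ,
    ⟨β, forall_insert_of_forall hsβ le_rfl⟩, forall_insert_of_forall hsmem hβ⟩

theorem extend_into_dense_with_max_general (ν : Ordinal → ℕ) (k : ℕ)
    (p : Set Ordinal) (hp : p ∈ Pforcing ν k)
    (D : Set (Set Ordinal)) (hDsub : D ⊆ Pforcing ν k)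
    (hopen : ∀ r ∈ Pforcing ν k, ∀ q ∈ D, EndExt r q → r ∈ D)
    (β : Ordinal) (hβgt : sSup p < β)
    (hβ : IsRegOrd β ∨ (IsSing β ∧ k + 1 ≤ ν β))
    (hcatch : ∀ r ∈ Pforcing ν k, sSup r < β →
      ∃ s ∈ D, EndExt s r ∧ sSup s < β) :
    ∃ q ∈ Pforcing ν k, EndExt q p ∧ q ∈ D ∧ β ∈ q ∧ ∀ x ∈ q, x ≤ β := by
  obtain ⟨s, hsD, hsp, hsβ⟩ := hcatch p hp hβgt
  have hs := hDsub hsD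
  have hlt : ∀ x ∈ s, x < β := fun x hx => (le_csSup hs.2.2.1 hx).trans_lt hsβ
  have hle : ∀ x ∈ s, x ≤ β := fun x hx => (hlt x hx).le
  have hqP : insert β s ∈ Pforcing ν k := insert_mem_pforcing hs hle hβ
  have hqs : EndExt (insert β s) s := endExt_insert_of_forall_lt hlt
  exact ⟨insert β s, hqP, hqs.trans hsp, hopen _ hqP s hsD hqs, mem_insert β s,
    forall_insert_of_forall hle le_rfl⟩

/-- meeting one dense open class with a condition whose maximum
is a prescribed suitable closure point `β`. -/
theorem extend_into_dense_with_max (S : GlobalSquare) (ν : Ordinal → ℕ)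
    (hν : IsAssocFn S ν) (k : ℕ)
    (p : Set Ordinal) (hp : p ∈ Pforcing ν k)
    (D : Set (Set Ordinal)) (hDsub : D ⊆ Pforcing ν k)
    (hdense : ∀ r ∈ Pforcing ν k, ∃ q ∈ D, EndExt q r)
    (hopen : ∀ r ∈ Pforcing ν k, ∀ q ∈ D, EndExt r q → r ∈ D)
    (β : Ordinal) (hβgt : sSup p < β)
    (hβ : IsRegOrd β ∨ (IsSing β ∧ k + 1 ≤ ν β))
    (hcatch : ∀ r ∈ Pforcing ν k, sSup r < β →
      ∃ s ∈ D, EndExt s r ∧ sSup s < β) :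
    ∃ q ∈ Pforcing ν k, EndExt q p ∧ q ∈ D ∧ β ∈ q ∧ ∀ x ∈ q, x ≤ β :=
  extend_into_dense_with_max_general ν k p hp D hDsub hopen β hβgt hβ hcatch
end

section
/- Let (C_β) be a global square sequence with associated function n, fix k ∈ ℕ, and let P be the associated class forcing ordered by end-extension. Let λ be a limit ordinal, let ⟨p_i : i < λ⟩ be a ≤-decreasing sequence of elements of P, and let β = sup_{i<λ} (max p_i). If β is a regular cardinal or n(β) ≥ k+1, then q = (⋃_{i<λ} p_i) ∪ {β} is an element of P and q ≤ p_i for every i < λ. -/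
open Set

theorem bddAbove_of_bot_lt_csSup {α : Type*} [ConditionallyCompleteLinearOrderBot α] {s : Set α}
    (hs : ⊥ < sSup s) : BddAbove s := by
  by_contra hnb
  rw [csSup_of_not_bddAbove hnb, csSup_empty] at hs
  exact hs.false

theorem IsRegOrd.pos {α : Ordinal} (h : IsRegOrd α) : 0 < α := by
  obtain ⟨κ, hκ, rfl⟩ := h
  exact hκ.ord_pos

theorem IsSing.pos {α : Ordinal} (h : IsSing α) : 0 < α :=
  h.1.pos

theorem EndExt.mem_of_le {p q : Set Ordinal} (h : EndExt p q) {x y : Ordinal} (hx : x ∈ p)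
    (hy : y ∈ q) (hxy : x ≤ y) : x ∈ q := by
  by_contra hxq
  exact (h.2 x ⟨hx, hxq⟩ y hy).not_ge hxy

theorem IsClosedSet.sSup_mem {p : Set Ordinal} (h : IsClosedSet p) (hne : p.Nonempty)
    (hbdd : BddAbove p) : sSup p ∈ p :=
  h p subset_rfl hne hbdd

section Chain

variable {lam : Ordinal} {p : Ordinal → Set Ordinal}

theorem mem_of_mem_biUnion_of_le (hdec : ∀ i j, i ≤ j → j < lam → EndExt (p j) (p i))
    {i : Ordinal} (hi : i < lam) {x y : Ordinal} (hx : x ∈ ⋃ j ∈ Iio lam, p j) (hy : y ∈ p i)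
    (hxy : x ≤ y) : x ∈ p i := by
  obtain ⟨j, hj, hxj⟩ := mem_iUnion₂.mp hx
  rcases le_total j i with hji | hij
  · exact (hdec j i hji hi).1 hxj
  · exact (hdec i j hij hj).mem_of_le hxj hy hxy

theorem le_sSup_image_sSup (hbdd : ∀ i < lam, BddAbove (p i))
    (himg : BddAbove ((fun i => sSup (p i)) '' Iio lam)) {i : Ordinal} (hi : i < lam)
    {x : Ordinal} (hx : x ∈ p i) : x ≤ sSup ((fun i => sSup (p i)) '' Iio lam) :=
  (le_csSup (hbdd i hi) hx).trans (le_csSup himg (mem_image_of_mem _ hi))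

theorem le_sSup_image_sSup_of_mem_union (hbdd : ∀ i < lam, BddAbove (p i))
    (himg : BddAbove ((fun i => sSup (p i)) '' Iio lam)) {x : Ordinal}
    (hx : x ∈ (⋃ i ∈ Iio lam, p i) ∪ {sSup ((fun i => sSup (p i)) '' Iio lam)}) :
    x ≤ sSup ((fun i => sSup (p i)) '' Iio lam) := by
  rcases hx with hx | rfl
  · obtain ⟨i, hi, hxi⟩ := mem_iUnion₂.mp hx
    exact le_sSup_image_sSup hbdd himg hi hxi
  · exact le_rfl

theorem mem_of_mem_union_sSup_of_le (hbdd : ∀ i < lam, BddAbove (p i))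
    (himg : BddAbove ((fun i => sSup (p i)) '' Iio lam))
    (hdec : ∀ i j, i ≤ j → j < lam → EndExt (p j) (p i)) {i : Ordinal} (hi : i < lam)
    {x y : Ordinal} (hx : x ∈ (⋃ j ∈ Iio lam, p j) ∪ {sSup ((fun i => sSup (p i)) '' Iio lam)})
    (hy : y ∈ p i) (hxy : x ≤ y) : x ∈ p i := by
  rcases hx with hx | rfl
  · exact mem_of_mem_biUnion_of_le hdec hi hx hy hxy
  · rwa [hxy.antisymm (le_sSup_image_sSup hbdd himg hi hy)]

theorem endExt_union_sSup (hbdd : ∀ i < lam, BddAbove (p i))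
    (himg : BddAbove ((fun i => sSup (p i)) '' Iio lam))
    (hdec : ∀ i j, i ≤ j → j < lam → EndExt (p j) (p i)) {i : Ordinal} (hi : i < lam) :
    EndExt ((⋃ j ∈ Iio lam, p j) ∪ {sSup ((fun i => sSup (p i)) '' Iio lam)}) (p i) :=
  ⟨fun _ hx => Or.inl (mem_biUnion hi hx), fun _ hx _ hy =>
    lt_of_not_ge fun hxy => hx.2 (mem_of_mem_union_sSup_of_le hbdd himg hdec hi hx.1 hy hxy)⟩

theorem isClosedSet_union_sSup (hne : ∀ i < lam, (p i).Nonempty)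
    (hcl : ∀ i < lam, IsClosedSet (p i)) (hbdd : ∀ i < lam, BddAbove (p i))
    (himg : BddAbove ((fun i => sSup (p i)) '' Iio lam))
    (hdec : ∀ i j, i ≤ j → j < lam → EndExt (p j) (p i)) :
    IsClosedSet ((⋃ i ∈ Iio lam, p i) ∪ {sSup ((fun i => sSup (p i)) '' Iio lam)}) := by
  intro s hs hsne hsbdd
  rcases (csSup_le hsne fun x hx => le_sSup_image_sSup_of_mem_union hbdd himg (hs hx)).eq_or_lt
    with heq | hlt
  · exact Or.inr heq
  -- Below the cap, `s` lies below the top of some `p i`, hence inside the closed set `p i`.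
  obtain ⟨_, ⟨i, hi, rfl⟩, hsi⟩ := exists_lt_of_lt_csSup' hlt
  have hsub : s ⊆ p i := fun x hx =>
    mem_of_mem_union_sSup_of_le hbdd himg hdec hi (hs hx)
      ((hcl i hi).sSup_mem (hne i hi) (hbdd i hi)) ((le_csSup hsbdd hx).trans hsi.le)
  exact Or.inl (mem_biUnion hi ((hcl i hi) s hsub hsne hsbdd))

end Chain

theorem Pforcing_limit_condition_general (ν : Ordinal → ℕ)
    (k : ℕ)
    (lam : Ordinal)
    (p : Ordinal → Set Ordinal) (hp : ∀ i < lam, p i ∈ Pforcing ν k)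
    (hdec : ∀ i j, i ≤ j → j < lam → EndExt (p j) (p i))
    (β : Ordinal) (hβ : β = sSup ((fun i => sSup (p i)) '' Set.Iio lam))
    (hβok : IsRegOrd β ∨ (IsSing β ∧ k + 1 ≤ ν β)) :
    (⋃ i ∈ Set.Iio lam, p i) ∪ {β} ∈ Pforcing ν k ∧
    ∀ i < lam, EndExt ((⋃ j ∈ Set.Iio lam, p j) ∪ {β}) (p i) := by
  -- `sSup` of an unbounded set of ordinals is `0`, which `β` is not.
  have himg : BddAbove ((fun i => sSup (p i)) '' Iio lam) :=
    bddAbove_of_bot_lt_csSup <| Ordinal.bot_eq_zero ▸ hβ ▸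
      hβok.elim IsRegOrd.pos fun h => IsSing.pos h.1
  subst hβ
  have hbdd : ∀ i < lam, BddAbove (p i) := fun i hi => (hp i hi).2.2.1
  refine ⟨⟨⟨_, Or.inr rfl⟩,
    isClosedSet_union_sSup (fun i hi => (hp i hi).1) (fun i hi => (hp i hi).2.1) hbdd himg hdec,
    ⟨_, fun _ hx => le_sSup_image_sSup_of_mem_union hbdd himg hx⟩, ?_⟩,
    fun i hi => endExt_union_sSup hbdd himg hdec hi⟩
  rintro α (hα | rfl)
  · obtain ⟨i, hi, hαi⟩ := mem_iUnion₂.mp hα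
    exact (hp i hi).2.2.2 α hαi
  · exact hβok

/-- unions of decreasing sequences of conditions, capped by a
suitable ordinal `β`, are conditions extending every member of the sequence. -/
theorem Pforcing_limit_condition (S : GlobalSquare) (ν : Ordinal → ℕ)
    (hν : IsAssocFn S ν) (k : ℕ)
    (lam : Ordinal) (hlam : Order.IsSuccLimit lam)
    (p : Ordinal → Set Ordinal) (hp : ∀ i < lam, p i ∈ Pforcing ν k)
    (hdec : ∀ i j, i ≤ j → j < lam → EndExt (p j) (p i))
    (β : Ordinal) (hβ : β = sSup ((fun i => sSup (p i)) '' Set.Iio lam))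
    (hβok : IsRegOrd β ∨ (IsSing β ∧ k + 1 ≤ ν β)) :
    (⋃ i ∈ Set.Iio lam, p i) ∪ {β} ∈ Pforcing ν k ∧
    ∀ i < lam, EndExt ((⋃ j ∈ Set.Iio lam, p j) ∪ {β}) (p i) :=
  Pforcing_limit_condition_general ν k lam p hp hdec β hβ hβok
end
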